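/- If X is a random vector with ‖X‖_s ≤ R almost surely and B is a matrix with ‖B'‖_s ≤ C̄ (induced ℓ_s norm of the transpose), then for any one-hot y, the log-loss satisfies h_B(X, y) ≤ log K + C̄ R (1 + K^{1/r}) almost surely, where 1/r + 1/s = 1. -/

import Mathlib

open Finset MeasureTheory

noncomputable def lpnorm (t : ℝ) {K : ℕ} (x : Fin K → ℝ) : ℝ :=
  (∑ i, |x i| ^ t) ^ (1 / t)

def stdBasis {K : ℕ} (i : Fin K) : Fin K → ℝ := fun m => if m = i then 1 else 0

noncomputable def opNorm (s : ℝ) {m n : ℕ} (A : Matrix (Fin m) (Fin n) ℝ) : ℝ :=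
  sSup {c | ∃ x : Fin n → ℝ, x ≠ 0 ∧ c = lpnorm s (A.mulVec x) / lpnorm s x}

noncomputable def hloss {p K : ℕ} (B : Matrix (Fin p) (Fin K) ℝ)
    (x : Fin p → ℝ) (y : Fin K → ℝ) : ℝ :=
  Real.log (∑ k, Real.exp (∑ i, B i k * x i)) - ∑ k, y k * ∑ i, B i k * x i

/-! Write `a = Bᵀ x`, so that `h_B(x, e_j) = log ∑ₖ exp aₖ - a_j`. Every coordinate of `a` is bounded
in absolute value by `‖a‖_s ≤ ‖Bᵀ‖_s ‖x‖_s ≤ C R`, hence the log-sum-exp term is at most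
`log K + C R` and `-a_j ≤ C R`. The resulting bound `log K + 2 C R` implies the claimed one
because `K ^ (1 / r) ≥ 1`. -/

lemma lpnorm_nonneg (t : ℝ) {K : ℕ} (x : Fin K → ℝ) : 0 ≤ lpnorm t x :=
  Real.rpow_nonneg (sum_nonneg fun _ _ => Real.rpow_nonneg (abs_nonneg _) _) _

lemma lpnorm_zero {s : ℝ} (hs : 0 < s) {K : ℕ} : lpnorm s (0 : Fin K → ℝ) = 0 := by
  simp [lpnorm, Real.zero_rpow hs.ne', Real.zero_rpow (inv_ne_zero hs.ne')]

lemma abs_le_lpnorm {s : ℝ} (hs : 0 < s) {K : ℕ} (x : Fin K → ℝ) (k : Fin K) :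
    |x k| ≤ lpnorm s x := by
  have hk : |x k| ^ s ≤ ∑ i, |x i| ^ s :=
    single_le_sum (f := fun i => |x i| ^ s) (fun _ _ => Real.rpow_nonneg (abs_nonneg _) _)
      (mem_univ k)
  calc |x k| = (|x k| ^ s) ^ (1 / s) := by
        rw [← Real.rpow_mul (abs_nonneg _), mul_one_div_cancel hs.ne', Real.rpow_one]
    _ ≤ lpnorm s x := Real.rpow_le_rpow (Real.rpow_nonneg (abs_nonneg _) _) hk (by positivity)

lemma lpnorm_pos {s : ℝ} (hs : 0 < s) {K : ℕ} {x : Fin K → ℝ} (hx : x ≠ 0) :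
    0 < lpnorm s x := by
  obtain ⟨k, hk⟩ := Function.ne_iff.mp hx
  exact (abs_pos.mpr hk).trans_le (abs_le_lpnorm hs x k)

lemma lpnorm_le_of_forall_abs_le {s : ℝ} (hs : 0 < s) {K : ℕ} {x : Fin K → ℝ} {M : ℝ}
    (hM : 0 ≤ M) (hx : ∀ k, |x k| ≤ M) : lpnorm s x ≤ (K : ℝ) ^ (1 / s) * M := by
  have hsum : ∑ k, |x k| ^ s ≤ K * M ^ s := by
    simpa using sum_le_sum fun k (_ : k ∈ univ) =>
      Real.rpow_le_rpow (abs_nonneg _) (hx k) hs.le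
  calc lpnorm s x ≤ (K * M ^ s) ^ (1 / s) :=
        Real.rpow_le_rpow (sum_nonneg fun _ _ => Real.rpow_nonneg (abs_nonneg _) _) hsum
          (by positivity)
    _ = (K : ℝ) ^ (1 / s) * M := by
        rw [Real.mul_rpow (Nat.cast_nonneg _) (Real.rpow_nonneg hM _), ← Real.rpow_mul hM,
          mul_one_div_cancel hs.ne', Real.rpow_one]

section opNorm

variable {s : ℝ} {m n : ℕ} (A : Matrix (Fin m) (Fin n) ℝ)

lemma abs_mulVec_le (hs : 0 < s) (x : Fin n → ℝ) (k : Fin m) :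
    |A.mulVec x k| ≤ (∑ l, ∑ i, |A l i|) * lpnorm s x :=
  calc |A.mulVec x k| ≤ ∑ i, |A k i| * |x i| := by
        simpa only [Matrix.mulVec, dotProduct, abs_mul] using abs_sum_le_sum_abs (fun i => A k i * x i) univ
    _ ≤ ∑ i, |A k i| * lpnorm s x :=
        sum_le_sum fun i _ => mul_le_mul_of_nonneg_left (abs_le_lpnorm hs x i) (abs_nonneg _)
    _ ≤ (∑ l, ∑ i, |A l i|) * lpnorm s x := by
        rw [← sum_mul]
        exact mul_le_mul_of_nonneg_right
          (single_le_sum (f := fun l => ∑ i, |A l i|)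
            (fun _ _ => sum_nonneg fun _ _ => abs_nonneg _) (mem_univ k))
          (lpnorm_nonneg s x)

lemma bddAbove_lpnorm_mulVec_div (hs : 0 < s) :
    BddAbove {c | ∃ x : Fin n → ℝ, x ≠ 0 ∧ c = lpnorm s (A.mulVec x) / lpnorm s x} := by
  refine ⟨(m : ℝ) ^ (1 / s) * ∑ l, ∑ i, |A l i|, ?_⟩
  rintro c ⟨x, hx, rfl⟩
  rw [div_le_iff₀ (lpnorm_pos hs hx), mul_assoc]
  exact lpnorm_le_of_forall_abs_le hs
    (mul_nonneg (sum_nonneg fun _ _ => sum_nonneg fun _ _ => abs_nonneg _) (lpnorm_nonneg s x))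
    (abs_mulVec_le A hs x)

lemma opNorm_nonneg : 0 ≤ opNorm s A :=
  Real.sSup_nonneg fun _ ⟨_, _, hc⟩ => hc ▸ div_nonneg (lpnorm_nonneg _ _) (lpnorm_nonneg _ _)

lemma lpnorm_mulVec_le_opNorm (hs : 0 < s) (x : Fin n → ℝ) :
    lpnorm s (A.mulVec x) ≤ opNorm s A * lpnorm s x := by
  by_cases hx : x = 0
  · simp [hx, lpnorm_zero hs]
  · rw [← div_le_iff₀ (lpnorm_pos hs hx)]
    exact le_csSup (bddAbove_lpnorm_mulVec_div A hs) ⟨x, hx, rfl⟩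

lemma abs_mulVec_le_opNorm (hs : 0 < s) (x : Fin n → ℝ) (k : Fin m) :
    |A.mulVec x k| ≤ opNorm s A * lpnorm s x :=
  (abs_le_lpnorm hs _ k).trans (lpnorm_mulVec_le_opNorm A hs x)

end opNorm

lemma log_sum_exp_le {ι : Type*} [Fintype ι] [Nonempty ι] {a : ι → ℝ} {M : ℝ}
    (ha : ∀ k, a k ≤ M) : Real.log (∑ k, Real.exp (a k)) ≤ Real.log (Fintype.card ι) + M := by
  have hsum : ∑ k, Real.exp (a k) ≤ Fintype.card ι * Real.exp M := by
    simpa using sum_le_sum fun k (_ : k ∈ univ) => Real.exp_le_exp.mpr (ha k)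
  calc Real.log (∑ k, Real.exp (a k)) ≤ Real.log (Fintype.card ι * Real.exp M) :=
        Real.log_le_log (sum_pos (fun _ _ => Real.exp_pos _) univ_nonempty) hsum
    _ = Real.log (Fintype.card ι) + M := by
        rw [Real.log_mul (by positivity) (Real.exp_pos _).ne', Real.log_exp]

lemma sum_stdBasis_mul {K : ℕ} (j : Fin K) (a : Fin K → ℝ) : ∑ k, stdBasis j k * a k = a j := by
  simp [stdBasis]

lemma hloss_stdBasis_le {p K : ℕ} (B : Matrix (Fin p) (Fin K) ℝ) (x : Fin p → ℝ) {M : ℝ}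
    (hM : ∀ k, |∑ i, B i k * x i| ≤ M) (j : Fin K) :
    hloss B x (stdBasis j) ≤ Real.log K + 2 * M := by
  have : Nonempty (Fin K) := ⟨j⟩
  have hlse := log_sum_exp_le fun k => (le_abs_self _).trans (hM k)
  rw [Fintype.card_fin] at hlse
  rw [hloss, sum_stdBasis_mul]
  linarith [neg_le_of_abs_le (hM j)]

theorem stmt9_general {p K : ℕ} {Ω : Type*} [MeasurableSpace Ω] (μ : Measure Ω)
    (X : Ω → (Fin p → ℝ)) (R C : ℝ)
    (r s : ℝ) (hr : 1 ≤ r) (hs : 1 ≤ s)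
    (hX : ∀ᵐ ω ∂μ, lpnorm s (X ω) ≤ R)
    (B : Matrix (Fin p) (Fin K) ℝ) (hB : opNorm s B.transpose ≤ C)
    (j : Fin K) :
    ∀ᵐ ω ∂μ, hloss B (X ω) (stdBasis j) ≤
      Real.log K + C * R * (1 + (K : ℝ) ^ (1 / r)) := by
  filter_upwards [hX] with ω hω
  have hs0 : 0 < s := zero_lt_one.trans_le hs
  have hCR : 0 ≤ C * R :=
    mul_nonneg ((opNorm_nonneg _).trans hB) ((lpnorm_nonneg s _).trans hω)
  have hKr : 1 ≤ (K : ℝ) ^ (1 / r) := Real.one_le_rpow (by exact_mod_cast j.pos) (by positivity)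
  have hcoord : ∀ k, |∑ i, B i k * X ω i| ≤ C * R := fun k =>
    calc |∑ i, B i k * X ω i| = |B.transpose.mulVec (X ω) k| := by
          simp only [Matrix.mulVec, dotProduct, Matrix.transpose_apply]
      _ ≤ opNorm s B.transpose * lpnorm s (X ω) := abs_mulVec_le_opNorm _ hs0 _ k
      _ ≤ C * R := mul_le_mul hB hω (lpnorm_nonneg s _) ((opNorm_nonneg _).trans hB)
  calc hloss B (X ω) (stdBasis j) ≤ Real.log K + 2 * (C * R) := hloss_stdBasis_le B _ hcoord j
    _ ≤ Real.log K + C * R * (1 + (K : ℝ) ^ (1 / r)) := by nlinarith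

theorem stmt9 {p K : ℕ} {Ω : Type*} [MeasurableSpace Ω] (μ : Measure Ω)
    [IsProbabilityMeasure μ] (X : Ω → (Fin p → ℝ)) (R C : ℝ)
    (r s : ℝ) (hr : 1 ≤ r) (hs : 1 ≤ s) (hrs : 1 / r + 1 / s = 1)
    (hX : ∀ᵐ ω ∂μ, lpnorm s (X ω) ≤ R)
    (B : Matrix (Fin p) (Fin K) ℝ) (hB : opNorm s B.transpose ≤ C)
    (j : Fin K) :
    ∀ᵐ ω ∂μ, hloss B (X ω) (stdBasis j) ≤
      Real.log K + C * R * (1 + (K : ℝ) ^ (1 / r)) :=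
  stmt9_general μ X R C r s hr hs hX B hB j
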